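/- Let G_I(t) be continuous matrix-valued functions indexed by nonempty multisets and D_I(t) the multivariable Dyson terms defined by iterated simplex integrals over ordered partitions of I. Then each D_I is differentiable and satisfies D_I'(t) = G_I(t) + Σ_{J ⊊ I, J nonempty} G_J(t) D_{I\J}(t), with D_I(0) = 0. -/

import Mathlib

set_option maxHeartbeats 1000000

open MeasureTheory intervalIntegral

attribute [local instance] Matrix.linftyOpNormedRing Matrix.linftyOpNormedAlgebra

/-- The iterated simplex integral
`∫_0^t dt₁ ∫_0^{t₁} dt₂ ⋯ ∫_0^{t_{k-1}} dt_k G₁(t₁) ⋯ G_k(t_k)` associated to a list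
`[G₁, ..., G_k]` of matrix-valued functions, defined recursively. -/
noncomputable def simplexIntegral {d : ℕ} :
    List (ℝ → Matrix (Fin d) (Fin d) ℂ) → ℝ → Matrix (Fin d) (Fin d) ℂ
  | [], _ => 1
  | G :: rest, t => ∫ s in (0:ℝ)..t, G s * simplexIntegral rest s

/-- The set of ordered partitions of the multiset `I` into `m` nonempty submultisets. -/
noncomputable def orderedPartitions {ι : Type*} [DecidableEq ι] (I : Multiset ι) (m : ℕ) :
    Finset (Fin m → Multiset ι) :=
  (Fintype.piFinset fun _ : Fin m => I.powerset.toFinset).filter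
    fun f => (∀ j, f j ≠ 0) ∧ ∑ j, f j = I

/-- The multivariable Dyson term
`D_I(t) = Σ_{m=1}^{|I|} Σ_{(I_1,...,I_m) ∈ P_m(I)}
  ∫_0^t dt₁ ⋯ ∫_0^{t_{m-1}} dt_m G_{I_1}(t₁) ⋯ G_{I_m}(t_m)`. -/
noncomputable def dysonTerm {ι : Type*} [DecidableEq ι] {d : ℕ}
    (G : Multiset ι → ℝ → Matrix (Fin d) (Fin d) ℂ) (I : Multiset ι) (t : ℝ) :
    Matrix (Fin d) (Fin d) ℂ :=
  ∑ m ∈ Finset.Icc 1 (Multiset.card I), ∑ f ∈ orderedPartitions I m,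
    simplexIntegral (List.ofFn fun j => G (f j)) t

section Aux

variable {ι : Type*} [DecidableEq ι] {d : ℕ}

lemma simplexIntegral_cons (g : ℝ → Matrix (Fin d) (Fin d) ℂ) (L) (t : ℝ) :
    simplexIntegral (g :: L) t = ∫ s in (0:ℝ)..t, g s * simplexIntegral L s := rfl

lemma simplexIntegral_continuous : ∀ (L : List (ℝ → Matrix (Fin d) (Fin d) ℂ)),
    (∀ g ∈ L, Continuous g) → Continuous (simplexIntegral L)
  | [], _ => continuous_const
  | g :: L, h => by
    have hg : Continuous g := h g List.mem_cons_self
    have hL := simplexIntegral_continuous L (fun g' hg' => h g' (List.mem_cons_of_mem _ hg'))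
    have hint : Continuous fun s => g s * simplexIntegral L s := hg.mul hL
    exact intervalIntegral.continuous_primitive (fun a b => hint.intervalIntegrable a b) 0

lemma mem_orderedPartitions {I : Multiset ι} {m : ℕ} {f : Fin m → Multiset ι} :
    f ∈ orderedPartitions I m ↔ (∀ j, f j ≠ 0) ∧ ∑ j, f j = I := by
  constructor
  · intro h
    exact (Finset.mem_filter.mp h).2
  · intro h
    refine Finset.mem_filter.mpr ⟨Fintype.mem_piFinset.mpr fun j => ?_, h⟩
    rw [Multiset.mem_toFinset, Multiset.mem_powerset, ← h.2]
    exact Finset.single_le_sum (f := f) (fun i _ => Multiset.zero_le _) (Finset.mem_univ j)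

lemma orderedPartitions_eq_empty {I : Multiset ι} {m : ℕ} (h : Multiset.card I < m) :
    orderedPartitions I m = ∅ := by
  ext f
  simp only [mem_orderedPartitions, Finset.notMem_empty, iff_false, not_and]
  intro h1 h2
  have hc : Multiset.card I = ∑ j : Fin m, Multiset.card (f j) := by
    rw [← h2, Multiset.card_sum]
  have : ∀ j : Fin m, 1 ≤ Multiset.card (f j) := fun j =>
    Multiset.card_pos.mpr (h1 j)
  have : (m : ℕ) ≤ Multiset.card I := by
    rw [hc]
    calc (m : ℕ) = ∑ _j : Fin m, 1 := by simp
    _ ≤ ∑ j : Fin m, Multiset.card (f j) := Finset.sum_le_sum fun j _ => this j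
  omega

lemma orderedPartitions_one {I : Multiset ι} (hI : I ≠ 0) :
    orderedPartitions I 1 = {fun _ => I} := by
  ext f
  simp only [mem_orderedPartitions, Finset.mem_singleton]
  constructor
  · rintro ⟨h1, h2⟩
    funext j
    have : f 0 = I := by simpa using h2
    have hj : j = 0 := Subsingleton.elim _ _
    rw [hj, this]
  · rintro rfl
    exact ⟨fun _ => hI, by simp⟩

lemma sum_orderedPartitions_succ {M : Type*} [AddCommMonoid M] (I : Multiset ι) (m : ℕ)
    (hm : 1 ≤ m) (F : Multiset ι → (Fin m → Multiset ι) → M) :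
    ∑ f ∈ orderedPartitions I (m + 1), F (f 0) (fun j => f j.succ)
      = ∑ J ∈ I.powerset.toFinset.filter (fun J => J ≠ 0 ∧ J ≠ I),
          ∑ g ∈ orderedPartitions (I - J) m, F J g := by
  rw [Finset.sum_sigma']
  refine Finset.sum_nbij' (i := fun f => ⟨f 0, fun j => f j.succ⟩)
    (j := fun p => Fin.cons p.1 p.2) ?_ ?_ ?_ ?_ ?_
  · intro f hf
    obtain ⟨h1, h2⟩ := mem_orderedPartitions.mp hf
    rw [Fin.sum_univ_succ] at h2
    have hle : f 0 ≤ I := le_of_add_le_left h2.le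
    have htail : ∑ j : Fin m, f j.succ = I - f 0 :=
      eq_tsub_of_add_eq (by rw [add_comm]; exact h2)
    have htne : I - f 0 ≠ 0 := by
      rw [← htail]
      intro hz
      have := Finset.sum_eq_zero_iff.mp hz ⟨0, hm⟩ (Finset.mem_univ _)
      exact h1 _ this
    refine Finset.mem_sigma.mpr ⟨Finset.mem_filter.mpr ⟨?_, h1 0, ?_⟩, ?_⟩
    · rw [Multiset.mem_toFinset, Multiset.mem_powerset]; exact hle
    · intro hfI
      exact htne (by rw [show f 0 = I from hfI, tsub_self])
    · exact mem_orderedPartitions.mpr ⟨fun j => h1 j.succ, htail⟩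
  · rintro ⟨J, g⟩ hp
    obtain ⟨hJ, hg⟩ := Finset.mem_sigma.mp hp
    obtain ⟨hJP, hJ0, hJI⟩ := Finset.mem_filter.mp hJ
    have hJle : J ≤ I := by
      rw [Multiset.mem_toFinset, Multiset.mem_powerset] at hJP; exact hJP
    obtain ⟨hg1, hg2⟩ := mem_orderedPartitions.mp hg
    refine mem_orderedPartitions.mpr ⟨?_, ?_⟩
    · intro j
      refine Fin.cases ?_ ?_ j
      · simpa using hJ0
      · intro i; simpa using hg1 i
    · rw [Fin.sum_univ_succ]
      simp only [Fin.cons_zero, Fin.cons_succ]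
      rw [hg2, add_tsub_cancel_of_le hJle]
  · intro f _
    exact (Fin.cons_self_tail f).symm ▸ rfl
  · rintro ⟨J, g⟩ _
    simp [Fin.cons_zero, Fin.cons_succ]
  · intro f _
    simp [Fin.cons_zero, Fin.cons_succ]


lemma sum_Icc_one {M : Type*} [AddCommMonoid M] (n : ℕ) (h : ℕ → M) :
    ∑ m ∈ Finset.Icc 1 n, h m = ∑ k ∈ Finset.range n, h (k + 1) := by
  rw [← Finset.Ico_add_one_right_eq_Icc, Finset.sum_Ico_eq_sum_range, Nat.add_sub_cancel]
  exact Finset.sum_congr rfl fun i _ => by rw [Nat.add_comm]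

lemma simplexIntegral_ofFn_continuous (G : Multiset ι → ℝ → Matrix (Fin d) (Fin d) ℂ)
    (hG : ∀ J, Continuous (G J)) (m : ℕ) (f : Fin m → Multiset ι) :
    Continuous (simplexIntegral (List.ofFn fun j => G (f j))) :=
  simplexIntegral_continuous _ (fun g hg => by
    obtain ⟨j, rfl⟩ := List.mem_ofFn.mp hg
    exact hG _)

lemma dysonTerm_continuous (G : Multiset ι → ℝ → Matrix (Fin d) (Fin d) ℂ)
    (hG : ∀ J, Continuous (G J)) (I : Multiset ι) : Continuous (dysonTerm G I) := by
  unfold dysonTerm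
  exact continuous_finset_sum _ fun m _ => continuous_finset_sum _ fun f _ =>
    simplexIntegral_ofFn_continuous G hG m f

lemma dysonTerm_eq (G : Multiset ι → ℝ → Matrix (Fin d) (Fin d) ℂ)
    (hG : ∀ J, Continuous (G J)) (I : Multiset ι) (hI : I ≠ 0) (t : ℝ) :
    dysonTerm G I t = (∫ s in (0:ℝ)..t, G I s)
      + ∑ J ∈ I.powerset.toFinset.filter (fun J => J ≠ 0 ∧ J ≠ I),
          ∫ s in (0:ℝ)..t, G J s * dysonTerm G (I - J) s := by
  obtain ⟨n', hn⟩ : ∃ n', Multiset.card I = n' + 1 :=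
    ⟨Multiset.card I - 1, by have := Multiset.card_pos.mpr hI; omega⟩
  have key2 : ∀ J : Multiset ι, (∫ s in (0:ℝ)..t, G J s * dysonTerm G (I - J) s)
      = ∑ m ∈ Finset.Icc 1 (Multiset.card (I - J)), ∑ g ∈ orderedPartitions (I - J) m,
          ∫ s in (0:ℝ)..t, G J s * simplexIntegral (List.ofFn fun j => G (g j)) s := by
    intro J
    calc (∫ s in (0:ℝ)..t, G J s * dysonTerm G (I - J) s)
        = ∫ s in (0:ℝ)..t, ∑ m ∈ Finset.Icc 1 (Multiset.card (I - J)),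
            ∑ g ∈ orderedPartitions (I - J) m,
              G J s * simplexIntegral (List.ofFn fun j => G (g j)) s := by
          simp only [dysonTerm, Finset.mul_sum]
      _ = ∑ m ∈ Finset.Icc 1 (Multiset.card (I - J)), ∫ s in (0:ℝ)..t,
            ∑ g ∈ orderedPartitions (I - J) m,
              G J s * simplexIntegral (List.ofFn fun j => G (g j)) s :=
          intervalIntegral.integral_finset_sum (fun m _ =>
            (continuous_finset_sum _ fun g _ =>
              (hG J).mul (simplexIntegral_ofFn_continuous G hG m g)).intervalIntegrable _ _)
      _ = _ := Finset.sum_congr rfl fun m _ =>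
            intervalIntegral.integral_finset_sum fun g _ =>
              ((hG J).mul (simplexIntegral_ofFn_continuous G hG m g)).intervalIntegrable _ _
  have key3 : ∀ k ∈ Finset.range n',
      ∑ f ∈ orderedPartitions I (k + 1 + 1), simplexIntegral (List.ofFn fun j => G (f j)) t
        = ∑ J ∈ I.powerset.toFinset.filter (fun J => J ≠ 0 ∧ J ≠ I),
            ∑ g ∈ orderedPartitions (I - J) (k + 1),
              ∫ s in (0:ℝ)..t, G J s * simplexIntegral (List.ofFn fun j => G (g j)) s := by
    intro k _
    rw [← sum_orderedPartitions_succ I (k + 1) (Nat.le_add_left 1 k)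
        (F := fun J g => ∫ s in (0:ℝ)..t, G J s * simplexIntegral (List.ofFn fun j => G (g j)) s)]
    refine Finset.sum_congr rfl fun f _ => ?_
    rw [List.ofFn_succ]
    rfl
  have h1 : ∑ f ∈ orderedPartitions I (0 + 1),
      simplexIntegral (List.ofFn fun j => G (f j)) t = ∫ s in (0:ℝ)..t, G I s := by
    rw [show (0 + 1) = 1 from rfl, orderedPartitions_one hI, Finset.sum_singleton]
    simp [simplexIntegral, List.ofFn_succ]
  conv_lhs => rw [dysonTerm]
  rw [hn, sum_Icc_one, Finset.sum_range_succ', h1, add_comm]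
  congr 1
  rw [Finset.sum_congr rfl key3, Finset.sum_comm]
  refine Finset.sum_congr rfl fun J hJ => ?_
  rw [key2 J]
  rw [← sum_Icc_one n' (fun m => ∑ g ∈ orderedPartitions (I - J) m,
        ∫ s in (0:ℝ)..t, G J s * simplexIntegral (List.ofFn fun j => G (g j)) s)]
  obtain ⟨hJP, hJ0, hJI⟩ := Finset.mem_filter.mp hJ
  have hJle : J ≤ I := by
    rw [Multiset.mem_toFinset, Multiset.mem_powerset] at hJP; exact hJP
  have hc : Multiset.card (I - J) ≤ n' := by
    rw [Multiset.card_sub hJle]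
    have h1' : 0 < Multiset.card J := Multiset.card_pos.mpr hJ0
    have h2' : Multiset.card J ≤ Multiset.card I := Multiset.card_le_card hJle
    omega
  refine (Finset.sum_subset (Finset.Icc_subset_Icc_right hc) fun m hm hnot => ?_).symm
  rw [Finset.mem_Icc] at hm hnot
  rw [orderedPartitions_eq_empty (by omega), Finset.sum_empty]

end Aux

/-- Each multivariable Dyson term is differentiable with
`D_I'(t) = G_I(t) + Σ_{J ⊊ I, J ≠ ∅} G_J(t) D_{I∖J}(t)` and `D_I(0) = 0`. -/
theorem stmt10 {ι : Type*} [DecidableEq ι] {d : ℕ}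
    (G : Multiset ι → ℝ → Matrix (Fin d) (Fin d) ℂ)
    (hG : ∀ J, Continuous (G J)) (I : Multiset ι) (hI : I ≠ 0) :
    (∀ t : ℝ, HasDerivAt (dysonTerm G I)
      (G I t + ∑ J ∈ I.powerset.toFinset.filter (fun J => J ≠ 0 ∧ J ≠ I),
        G J t * dysonTerm G (I - J) t) t) ∧
    dysonTerm G I 0 = 0 := by
  constructor
  · intro t
    have heq : dysonTerm G I = fun u => (∫ s in (0:ℝ)..u, G I s)
        + ∑ J ∈ I.powerset.toFinset.filter (fun J => J ≠ 0 ∧ J ≠ I),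
            ∫ s in (0:ℝ)..u, G J s * dysonTerm G (I - J) s :=
      funext fun u => dysonTerm_eq G hG I hI u
    rw [heq]
    haveI : TopologicalSpace.PseudoMetrizableSpace (Matrix (Fin d) (Fin d) ℂ) :=
      inferInstanceAs (TopologicalSpace.PseudoMetrizableSpace (Fin d → Fin d → ℂ))
    have h1 : HasDerivAt (fun u => ∫ s in (0:ℝ)..u, G I s) (G I t) t :=
      intervalIntegral.integral_hasDerivAt_right ((hG I).intervalIntegrable _ _)
        ((hG I).stronglyMeasurable.stronglyMeasurableAtFilter) (hG I).continuousAt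
    refine h1.add (HasDerivAt.fun_sum fun J _ => ?_)
    have hc : Continuous fun s => G J s * dysonTerm G (I - J) s :=
      (hG J).mul (dysonTerm_continuous G hG (I - J))
    exact intervalIntegral.integral_hasDerivAt_right (hc.intervalIntegrable _ _)
      (hc.stronglyMeasurable.stronglyMeasurableAtFilter) hc.continuousAt
  · rw [dysonTerm_eq G hG I hI 0]
    simp
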